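/- arXiv:1807.06648 — 2 statements merged into one kernel-verified Lean document; each statement's English description precedes it below -/
import Mathlib

section
/- Let w : ℝ → ℝ be a smooth function supported on the interval [1, 2] and satisfying ∫₀^∞ w(t)·t^{−1} dt = 1. Let Y ≥ 1 and let n be a positive integer with n ≡ 1 (mod 4). Then λ(n) = ∫₀^∞ [ w(y/Y) + w(n/(yY)) ] · ( ∑_{b | n, b < y} χ(b) ) · y^{−1} dy, where the inner sum runs over positive divisors b of n with b < y. -/
open scoped Classical

noncomputable section

/-- The nontrivial Dirichlet character of conductor 4. -/
def chi (n : ℕ) : ℝ := if n % 4 = 1 then 1 else if n % 4 = 3 then -1 else 0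

/-- `lam n = ∑_{d ∣ n} χ(d)`. -/
def lam (n : ℕ) : ℝ := ∑ d ∈ n.divisors, chi d

section Helpers

open Set MeasureTheory

lemma chi_mul_self_div {n b : ℕ} (hn4 : n % 4 = 1) (hb : b ∣ n) :
    chi (n / b) = chi b := by
  have hmul : b * (n / b) = n := Nat.mul_div_cancel' hb
  set c := n / b with hc
  have h4 : (b % 4) * (c % 4) % 4 = 1 := by rw [← Nat.mul_mod, hmul, hn4]
  have hb' : b % 4 = 0 ∨ b % 4 = 1 ∨ b % 4 = 2 ∨ b % 4 = 3 := by omega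
  have hc' : c % 4 = 0 ∨ c % 4 = 1 ∨ c % 4 = 2 ∨ c % 4 = 3 := by omega
  rcases hb' with h|h|h|h <;> rcases hc' with h'|h'|h'|h' <;>
    rw [h, h'] at h4 <;> simp [chi, h, h'] <;> omega

lemma supp_zero {w : ℝ → ℝ} (hsupp : Function.support w ⊆ Set.Icc 1 2)
    {t : ℝ} (ht : t ∉ Set.Icc (1:ℝ) 2) : w t = 0 :=
  Function.notMem_support.mp (fun h => ht (hsupp h))

lemma g0_integrable {w : ℝ → ℝ} (hw : Continuous w)
    (hsupp : Function.support w ⊆ Set.Icc 1 2) :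
    Integrable (fun t : ℝ => w t / t) := by
  have hzero : ∀ t : ℝ, t ∉ Set.Icc (1:ℝ) 2 → w t / t = 0 := by
    intro t ht
    rw [supp_zero hsupp ht, zero_div]
  have hcont : Continuous (fun t : ℝ => w t / t) := by
    rw [continuous_iff_continuousAt]
    intro t
    rcases eq_or_ne t 0 with rfl | ht
    · have hev : (fun t : ℝ => w t / t) =ᶠ[nhds 0] fun _ => 0 := by
        filter_upwards [Metric.ball_mem_nhds (0:ℝ) one_pos] with x hx
        have hx' : |x| < 1 := by simpa [Real.dist_eq] using hx
        apply hzero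
        simp only [Set.mem_Icc, not_and_or, not_le]
        cases abs_lt.mp hx' with
        | intro h1 h2 => left; linarith
      exact continuousAt_const.congr hev.symm
    · exact hw.continuousAt.div continuousAt_id ht
  exact hcont.integrable_of_hasCompactSupport
    (HasCompactSupport.intro isCompact_Icc hzero)

lemma A1_integrable {w : ℝ → ℝ} (hw : Continuous w)
    (hsupp : Function.support w ⊆ Set.Icc 1 2) {c : ℝ} (hc : 0 < c) :
    Integrable (fun y : ℝ => w (y / c) / y) := by
  have hzero : ∀ y : ℝ, y ∉ Set.Icc c (2 * c) → w (y / c) / y = 0 := by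
    intro y hy
    have : w (y / c) = 0 := by
      apply supp_zero hsupp
      simp only [Set.mem_Icc, not_and_or, not_le] at hy ⊢
      rcases hy with h | h
      · left; rw [div_lt_iff₀ hc]; linarith
      · right; rw [lt_div_iff₀ hc]; linarith
    simp [this]
  have hcont : Continuous (fun y : ℝ => w (y / c) / y) := by
    rw [continuous_iff_continuousAt]
    intro t
    rcases eq_or_ne t 0 with rfl | ht
    · have hev : (fun y : ℝ => w (y / c) / y) =ᶠ[nhds 0] fun _ => 0 := by
        filter_upwards [Metric.ball_mem_nhds (0:ℝ) hc] with x hx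
        have hx' : |x| < c := by simpa [Real.dist_eq] using hx
        exact hzero x (by
          simp only [Set.mem_Icc, not_and_or, not_le]
          left
          cases abs_lt.mp hx' with
          | intro h1 h2 => linarith)
      exact continuousAt_const.congr hev.symm
    · exact ((hw.comp (continuous_id.div_const c)).continuousAt).div continuousAt_id ht
  exact hcont.integrable_of_hasCompactSupport
    (HasCompactSupport.intro isCompact_Icc hzero)

lemma A2_integrable {w : ℝ → ℝ} (hw : Continuous w)
    (hsupp : Function.support w ⊆ Set.Icc 1 2) {k : ℝ} (hk : 0 < k) :
    Integrable (fun y : ℝ => w (k / y) / y) := by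
  have hzero : ∀ y : ℝ, y ∉ Set.Icc (k / 2) k → w (k / y) / y = 0 := by
    intro y hy
    have : w (k / y) = 0 := by
      apply supp_zero hsupp
      simp only [Set.mem_Icc, not_and_or, not_le] at hy
      intro hmem
      obtain ⟨h1, h2⟩ := Set.mem_Icc.mp hmem
      have hy0 : 0 < y := by
        by_contra h
        push_neg at h
        have : k / y ≤ 0 := by rw [div_nonpos_iff]; left; exact ⟨hk.le, h⟩
        linarith
      have hyk : y ≤ k := by
        have := (one_le_div hy0).mp h1
        linarith
      have hky : k / 2 ≤ y := by
        rw [div_le_iff₀ hy0] at h2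
        linarith
      rcases hy with h | h <;> linarith
    simp [this]
  have hcont : Continuous (fun y : ℝ => w (k / y) / y) := by
    rw [continuous_iff_continuousAt]
    intro t
    rcases eq_or_ne t 0 with rfl | ht
    · have hev : (fun y : ℝ => w (k / y) / y) =ᶠ[nhds 0] fun _ => 0 := by
        filter_upwards [Metric.ball_mem_nhds (0:ℝ) (by positivity : (0:ℝ) < k / 2)] with x hx
        have hx' : |x| < k / 2 := by simpa [Real.dist_eq] using hx
        apply hzero x
        simp only [Set.mem_Icc, not_and_or, not_le]
        cases abs_lt.mp hx' with
        | intro h1 h2 => left; linarith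
      exact continuousAt_const.congr hev.symm
    · exact ((hw.continuousAt.comp (continuousAt_const.div continuousAt_id ht))).div
        continuousAt_id ht
  exact hcont.integrable_of_hasCompactSupport
    (HasCompactSupport.intro isCompact_Icc hzero)

lemma scale_int (w : ℝ → ℝ) {c : ℝ} (hc : 0 < c) (a : ℝ) :
    ∫ y in Set.Ioi a, w (y / c) / y = ∫ t in Set.Ioi (a / c), w t / t := by
  have h := MeasureTheory.integral_comp_mul_left_Ioi (fun y => w (y / c) / y) (a / c) hc
  have hca : c * (a / c) = a := by field_simp
  rw [hca] at h
  have h2 : ∀ x : ℝ, w ((c * x) / c) / (c * x) = c⁻¹ * (w x / x) := by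
    intro x
    rw [mul_div_cancel_left₀ _ hc.ne']
    ring
  simp only [h2] at h
  rw [MeasureTheory.integral_const_mul] at h
  have := congrArg (fun z => c * z) h
  simp only [smul_eq_mul] at this ⊢
  rw [← mul_assoc, ← mul_assoc, mul_inv_cancel₀ hc.ne', one_mul, one_mul] at this
  exact this.symm

lemma inv_int (w : ℝ → ℝ) {k a : ℝ} (hk : 0 < k) (ha : 0 < a) :
    ∫ y in Set.Ioi a, w (k / y) / y = ∫ u in Set.Ioo 0 (k / a), w u / u := by
  have hinv : ∀ u : ℝ, u ≠ 0 → k / (k / u) = u := by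
    intro u hu; field_simp
  have himg : (fun y => k / y) '' Set.Ioi a = Set.Ioo 0 (k / a) := by
    ext u
    constructor
    · rintro ⟨y, hy, rfl⟩
      have hy0 : 0 < y := ha.trans hy
      exact ⟨div_pos hk hy0, div_lt_div_of_pos_left hk ha hy⟩
    · rintro ⟨hu1, hu2⟩
      refine ⟨k / u, ?_, hinv u hu1.ne'⟩
      rw [Set.mem_Ioi, lt_div_iff₀ hu1]
      have := (lt_div_iff₀ ha).mp hu2
      linarith
  have hderiv : ∀ y ∈ Set.Ioi a,
      HasDerivWithinAt (fun y => k / y) (-(k / y ^ 2)) (Set.Ioi a) y := by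
    intro y hy
    have hy0 : y ≠ 0 := (ha.trans hy).ne'
    have h1 : HasDerivAt (fun y : ℝ => k * y⁻¹) (k * (-(y ^ 2)⁻¹)) y :=
      (hasDerivAt_inv hy0).const_mul k
    have h2 : HasDerivAt (fun y : ℝ => k / y) (-(k / y ^ 2)) y := by
      simpa [div_eq_mul_inv, mul_neg] using h1
    exact h2.hasDerivWithinAt
  have hinj : Set.InjOn (fun y => k / y) (Set.Ioi a) := by
    intro x hx y hy h
    have hx0 : (x : ℝ) ≠ 0 := (ha.trans hx).ne'
    have hy0 : (y : ℝ) ≠ 0 := (ha.trans hy).ne'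
    simp only at h
    rw [div_eq_div_iff hx0 hy0] at h
    exact (mul_left_cancel₀ hk.ne' h).symm
  have hmain := MeasureTheory.integral_image_eq_integral_abs_deriv_smul
    measurableSet_Ioi hderiv hinj (fun u => w u / u)
  rw [himg] at hmain
  rw [hmain]
  apply MeasureTheory.setIntegral_congr_fun measurableSet_Ioi
  intro y hy
  have hy0 : 0 < y := ha.trans hy
  simp only [smul_eq_mul]
  rw [abs_neg, abs_of_nonneg (by positivity : (0:ℝ) ≤ k / y ^ 2)]
  field_simp

lemma ioo_eval {w : ℝ → ℝ} (hw : Continuous w)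
    (hsupp : Function.support w ⊆ Set.Icc 1 2)
    (hint : ∫ t in Set.Ioi (0 : ℝ), w t / t = 1) {s : ℝ} (hs : 0 < s) :
    ∫ u in Set.Ioo 0 s, w u / u = 1 - ∫ t in Set.Ioi s, w t / t := by
  have hg := g0_integrable hw hsupp
  have hu : Set.Ioo 0 s ∪ Set.Ici s = Set.Ioi 0 := Set.Ioo_union_Ici_eq_Ioi hs
  have hd : Disjoint (Set.Ioo 0 s) (Set.Ici s) := by
    rw [Set.disjoint_left]
    rintro x ⟨_, hx2⟩ hx3
    exact absurd hx3 (not_le.mpr hx2)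
  have hsplit := MeasureTheory.setIntegral_union hd measurableSet_Ici
    hg.integrableOn hg.integrableOn (f := fun t : ℝ => w t / t)
  rw [hu, hint, MeasureTheory.integral_Ici_eq_integral_Ioi] at hsplit
  linarith

end Helpers

theorem smoothed_divisor_switching (w : ℝ → ℝ) (hw : ContDiff ℝ (⊤ : ℕ∞) w)
    (hsupp : Function.support w ⊆ Set.Icc 1 2)
    (hint : ∫ t in Set.Ioi (0 : ℝ), w t / t = 1)
    (Y : ℝ) (hY : 1 ≤ Y) (n : ℕ) (hn : 0 < n) (hn4 : n % 4 = 1) :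
    lam n = ∫ y in Set.Ioi (0 : ℝ),
      (w (y / Y) + w ((n : ℝ) / (y * Y))) *
        (∑ b ∈ n.divisors.filter (fun b : ℕ => (b : ℝ) < y), chi b) / y := by
  have hwc : Continuous w := hw.continuous
  have hY0 : (0:ℝ) < Y := lt_of_lt_of_le one_pos hY
  have hnR : (0:ℝ) < (n:ℝ) := Nat.cast_pos.mpr hn
  set k : ℝ := (n:ℝ) / Y with hkdef
  have hk0 : 0 < k := div_pos hnR hY0
  set J : ℕ → ℝ := fun b => ∫ t in Set.Ioi ((b:ℝ)/Y), w t / t with hJdef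
  have key : ∀ y : ℝ, (w (y / Y) + w ((n : ℝ) / (y * Y))) *
        (∑ b ∈ n.divisors.filter (fun b : ℕ => (b : ℝ) < y), chi b) / y
      = ∑ b ∈ n.divisors, Set.indicator (Set.Ioi ((b:ℝ)))
          (fun y => chi b * (w (y / Y) / y + w (k / y) / y)) y := by
    intro y
    rw [Finset.sum_filter, Finset.mul_sum, Finset.sum_div]
    refine Finset.sum_congr rfl fun b _ => ?_
    rw [Set.indicator_apply]
    simp only [Set.mem_Ioi]
    have hky : (n:ℝ) / (y * Y) = k / y := by
      rw [hkdef, div_div, mul_comm Y y]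
    split_ifs with h
    · rw [hky]; ring
    · simp
  rw [MeasureTheory.setIntegral_congr_fun measurableSet_Ioi (fun y _ => key y)]
  rw [MeasureTheory.integral_finset_sum _ (fun b _ => by
    have h1 : MeasureTheory.Integrable
        (fun y : ℝ => chi b * (w (y / Y) / y + w (k / y) / y)) :=
      ((A1_integrable hwc hsupp hY0).add (A2_integrable hwc hsupp hk0)).const_mul (chi b)
    exact (h1.indicator measurableSet_Ioi).integrableOn)]
  have per : ∀ b ∈ n.divisors,
      (∫ y in Set.Ioi (0:ℝ), Set.indicator (Set.Ioi ((b:ℝ)))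
        (fun y => chi b * (w (y / Y) / y + w (k / y) / y)) y)
      = chi b * (J b + (1 - J (n / b))) := by
    intro b hb
    obtain ⟨hbd, -⟩ := Nat.mem_divisors.mp hb
    have hbpos : 0 < b := Nat.pos_of_mem_divisors hb
    have hbR : (0:ℝ) < (b:ℝ) := by exact_mod_cast hbpos
    rw [MeasureTheory.integral_indicator measurableSet_Ioi,
      MeasureTheory.Measure.restrict_restrict measurableSet_Ioi,
      Set.inter_eq_left.mpr (Set.Ioi_subset_Ioi hbR.le),
      MeasureTheory.integral_const_mul,
      MeasureTheory.integral_add ((A1_integrable hwc hsupp hY0).integrableOn)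
        ((A2_integrable hwc hsupp hk0).integrableOn)]
    have e1 : ∫ y in Set.Ioi ((b:ℝ)), w (y / Y) / y = J b := scale_int w hY0 _
    have e2 : ∫ y in Set.Ioi ((b:ℝ)), w (k / y) / y = 1 - J (n / b) := by
      rw [inv_int w hk0 hbR, ioo_eval hwc hsupp hint (div_pos hk0 hbR)]
      have hcast : ((n / b : ℕ) : ℝ) = (n:ℝ) / (b:ℝ) :=
        Nat.cast_div hbd (by exact_mod_cast hbpos.ne')
      have : k / (b:ℝ) = ((n / b : ℕ) : ℝ) / Y := by
        rw [hcast, hkdef, div_div, div_div, mul_comm Y (b:ℝ)]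
      rw [this]
    rw [e1, e2]
  rw [Finset.sum_congr rfl per]
  have reindex : ∑ b ∈ n.divisors, chi b * J (n / b)
      = ∑ b ∈ n.divisors, chi b * J b := by
    have h := Nat.sum_div_divisors n (fun d => chi (n / d) * J d)
    calc ∑ b ∈ n.divisors, chi b * J (n / b)
        = ∑ b ∈ n.divisors, chi (n / (n / b)) * J (n / b) :=
          Finset.sum_congr rfl (fun b hb => by
            rw [Nat.div_div_self (Nat.mem_divisors.mp hb).1 hn.ne'])
      _ = ∑ b ∈ n.divisors, chi (n / b) * J b := h
      _ = ∑ b ∈ n.divisors, chi b * J b :=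
          Finset.sum_congr rfl (fun b hb => by
            rw [chi_mul_self_div hn4 (Nat.mem_divisors.mp hb).1])
  simp only [mul_add, mul_sub, mul_one, Finset.sum_add_distrib, Finset.sum_sub_distrib]
  rw [reindex]
  unfold lam
  ring
end
end

section
/- The series ∑_{b ≥ 1} χ(b)/φ(b), summed over all positive integers b, converges, and its value c₁ satisfies c₁ = L(1, χ) · ∏_p ( 1 + χ(p)/(p(p−1)) ), where L(s, χ) is the Dirichlet L-function of χ and the product runs over all primes p (and converges). -/
/-!
Because `χ` is completely multiplicative and `n / φ(n) = ∑_{d ∣ n} μ(d)² / φ(d)`, the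
function `χ(b) / φ(b)` is the Dirichlet convolution of `g(d) = μ(d)² χ(d) / (d φ(d))` with
`χ(m) / m`. Since `n ≤ 2 φ(n)²`, `|g(d)| ≤ 2 d^(-3/2)` is absolutely summable, and the partial
sums of `χ(m) / m` are bounded and converge to `L(1, χ) = π / 4`; dominated convergence then
gives `∑ χ(b) / φ(b) = (∑ g) · L(1, χ)`. Finally `g` is multiplicative and vanishes on
non-squarefree numbers, so `∑ g` is the Euler product of the factors `1 + χ(p) / (p (p - 1))`.
-/

open Filter

noncomputable section

open Finset ArithmeticFunction Topology
open scoped Nat ArithmeticFunction.Moebius ArithmeticFunction.zeta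

lemma chi_eq_χ₄ (n : ℕ) : chi n = ZMod.χ₄ n := by
  rw [chi, ZMod.χ₄_nat_eq_if_mod_four]
  split_ifs <;> first | omega | norm_num

lemma chi_mul (a b : ℕ) : chi (a * b) = chi a * chi b := by
  simp only [chi_eq_χ₄, Nat.cast_mul, map_mul, Int.cast_mul]

lemma abs_chi_le_one (n : ℕ) : |chi n| ≤ 1 := by
  unfold chi; split_ifs <;> norm_num

lemma sum_range_chi_div (N : ℕ) :
    ∑ n ∈ range N, chi n / n = ∑ i ∈ range (N / 2), (-1 : ℝ) ^ i / (2 * i + 1) := by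
  induction N with
  | zero => simp
  | succ N ih =>
    rw [sum_range_succ, ih]
    rcases Nat.even_or_odd' N with ⟨k, rfl | rfl⟩
    · have hchi : chi (2 * k) = 0 := by rw [chi, if_neg (by omega), if_neg (by omega)]
      rw [hchi, zero_div, add_zero, show (2 * k + 1) / 2 = 2 * k / 2 by omega]
    · have hchi : chi (2 * k + 1) = (-1) ^ k := by
        rw [chi_eq_χ₄, ZMod.χ₄_eq_neg_one_pow (by omega), show (2 * k + 1) / 2 = k by omega]
        push_cast
        rfl
      rw [show (2 * k + 1 + 1) / 2 = k + 1 by omega, show (2 * k + 1) / 2 = k by omega,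
        sum_range_succ, hchi]
      push_cast
      rfl

lemma tendsto_sum_range_chi_div :
    Tendsto (fun N => ∑ n ∈ range N, chi n / n) atTop (𝓝 (Real.pi / 4)) := by
  simp_rw [sum_range_chi_div]
  exact Real.tendsto_sum_pi_div_four.comp (Nat.tendsto_div_const_atTop two_ne_zero)

theorem Nat.le_totient_sq_of_odd {n : ℕ} (hn : Odd n) : n ≤ φ n ^ 2 := by
  induction n using Nat.recOnPosPrimePosCoprime with
  | zero => simp at hn
  | one => simp
  | prime_pow p k hp hk =>
    have hp3 : 3 ≤ p := by
      obtain ⟨m, rfl⟩ := (Nat.odd_pow_iff hk.ne').mp hn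
      have := hp.two_le
      omega
    rw [Nat.totient_prime_pow hp hk, mul_pow]
    obtain ⟨j, rfl⟩ : ∃ j, k = j + 1 := ⟨k - 1, by omega⟩
    have hsq : p ≤ (p - 1) ^ 2 := by zify [hp.one_le]; nlinarith
    calc p ^ (j + 1) = p ^ j * p := pow_succ p j
      _ ≤ (p ^ j) ^ 2 * (p - 1) ^ 2 := Nat.mul_le_mul (Nat.le_self_pow two_ne_zero _) hsq
      _ = _ := by simp
  | coprime a b _ _ hab iha ihb =>
    obtain ⟨ha, hb⟩ := Nat.odd_mul.mp hn
    rw [Nat.totient_mul hab, mul_pow]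
    exact Nat.mul_le_mul (iha ha) (ihb hb)

theorem Nat.le_two_mul_totient_sq (n : ℕ) : n ≤ 2 * φ n ^ 2 := by
  rcases eq_or_ne n 0 with rfl | hn
  · simp
  obtain ⟨k, m, hm, rfl⟩ := Nat.exists_eq_two_pow_mul_odd hn
  have h2k : 2 ^ k ≤ 2 * φ (2 ^ k) ^ 2 := by
    rcases k.eq_zero_or_pos with rfl | hk
    · simp
    rw [Nat.totient_prime_pow Nat.prime_two hk, Nat.add_one_sub_one, mul_one, ← pow_mul,
      ← pow_succ']
    exact Nat.pow_le_pow_right two_pos (by omega)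
  rw [Nat.totient_mul ((Nat.coprime_two_left.mpr hm).pow_left k), mul_pow, ← mul_assoc]
  exact Nat.mul_le_mul h2k (Nat.le_totient_sq_of_odd hm)

theorem summable_inv_mul_totient : Summable fun n : ℕ => ((n : ℝ) * φ n)⁻¹ := by
  refine .of_nonneg_of_le (fun n => by positivity) (fun n => ?_)
    ((Real.summable_nat_rpow_inv.mpr (by norm_num : (1 : ℝ) < 3 / 2)).mul_left 2)
  rcases eq_or_ne n 0 with rfl | hn
  · simp
  have hn' : (0 : ℝ) < n := by positivity
  have hφ : (0 : ℝ) < φ n := by exact_mod_cast Nat.totient_pos.mpr (Nat.pos_of_ne_zero hn)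
  have hsqrt : √(n : ℝ) ≤ 2 * φ n := by
    rw [Real.sqrt_le_left (by positivity)]
    have : (n : ℝ) ≤ 2 * φ n ^ 2 := by exact_mod_cast Nat.le_two_mul_totient_sq n
    nlinarith
  calc ((n : ℝ) * φ n)⁻¹ = 2 * ((n : ℝ) * (2 * φ n))⁻¹ := by field_simp
    _ ≤ 2 * (n * √(n : ℝ))⁻¹ := by gcongr
    _ = 2 * ((n : ℝ) ^ (3 / 2 : ℝ))⁻¹ := by
      rw [show (3 / 2 : ℝ) = 1 + 1 / 2 by norm_num, Real.rpow_add hn', Real.rpow_one,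
        Real.sqrt_eq_rpow]

theorem ArithmeticFunction.pmul_mul_pmul {R : Type*} [CommSemiring R] {c : ArithmeticFunction R}
    (hc : ∀ a b, c (a * b) = c a * c b) (f g : ArithmeticFunction R) :
    f.pmul c * g.pmul c = (f * g).pmul c := by
  ext n
  simp only [mul_apply, pmul_apply, sum_mul]
  refine sum_congr rfl fun x hx => ?_
  rw [← (Nat.mem_divisorsAntidiagonal.mp hx).1, hc]
  ring

lemma ArithmeticFunction.sum_range_succ_eq_sum_Ioc {R : Type*} [AddCommMonoid R]
    (f : ArithmeticFunction R) (N : ℕ) :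
    ∑ n ∈ range (N + 1), f n = ∑ n ∈ Ioc 0 N, f n := by
  rw [range_eq_Ico, sum_eq_sum_Ico_succ_bot N.succ_pos, f.map_zero, zero_add]
  rfl

lemma ArithmeticFunction.tendsto_sum_range_iff_tendsto_sum_Ioc {R : Type*} [AddCommMonoid R]
    [TopologicalSpace R] (f : ArithmeticFunction R) {l : R} :
    Tendsto (fun N => ∑ n ∈ range N, f n) atTop (𝓝 l) ↔
      Tendsto (fun N => ∑ n ∈ Ioc 0 N, f n) atTop (𝓝 l) := by
  simp_rw [← sum_range_succ_eq_sum_Ioc]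
  exact (tendsto_add_atTop_iff_nat 1).symm

theorem ArithmeticFunction.tendsto_sum_Ioc_mul {R : Type*} [NormedRing R] [CompleteSpace R]
    {f g : ArithmeticFunction R} {l : R} (hf : Summable (‖f ·‖))
    (hg : Tendsto (fun N => ∑ n ∈ Ioc 0 N, g n) atTop (𝓝 l)) :
    Tendsto (fun N => ∑ n ∈ Ioc 0 N, (f * g) n) atTop (𝓝 ((∑' n, f n) * l)) := by
  set G := fun N => ∑ n ∈ Ioc 0 N, g n
  have hsum : ∀ N, ∑ n ∈ Ioc 0 N, (f * g) n = ∑' n, f n * G (N / n) := by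
    intro N
    rw [sum_Ioc_mul_eq_sum_sum]
    refine (tsum_eq_sum fun n hn => ?_).symm
    rcases eq_or_ne n 0 with rfl | hn0
    · simp
    · simp [Nat.div_eq_of_lt (show N < n by simp at hn; omega)]
  obtain ⟨C, hC⟩ := hg.norm.bddAbove_range
  rw [← hf.of_norm.tsum_mul_right]
  simp_rw [hsum]
  refine tendsto_tsum_of_dominated_convergence (bound := fun n => ‖f n‖ * C) (hf.mul_right C)
    (fun n => ?_) (Eventually.of_forall fun N n => ?_)
  · rcases eq_or_ne n 0 with rfl | hn
    · simp
    · exact (hg.comp (Nat.tendsto_div_const_atTop hn)).const_mul (f n)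
  · exact (norm_mul_le _ _).trans
      (mul_le_mul_of_nonneg_left (hC ⟨N / n, rfl⟩) (norm_nonneg _))

def moebiusSqDivTotient : ArithmeticFunction ℝ := ⟨fun n => (μ n : ℝ) ^ 2 / φ n, by simp⟩

def selfDivTotient : ArithmeticFunction ℝ := ⟨fun n => n / φ n, by simp⟩

@[simp]
lemma moebiusSqDivTotient_apply (n : ℕ) : moebiusSqDivTotient n = (μ n : ℝ) ^ 2 / φ n := rfl

@[simp]
lemma selfDivTotient_apply (n : ℕ) : selfDivTotient n = n / φ n := rfl

lemma isMultiplicative_moebiusSqDivTotient : moebiusSqDivTotient.IsMultiplicative := by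
  refine ⟨by simp, fun {m n} h => ?_⟩
  simp only [moebiusSqDivTotient_apply, isMultiplicative_moebius.map_mul_of_coprime h,
    Nat.totient_mul h]
  push_cast
  ring

lemma isMultiplicative_selfDivTotient : selfDivTotient.IsMultiplicative := by
  refine ⟨by simp, fun {m n} h => ?_⟩
  simp only [selfDivTotient_apply, Nat.totient_mul h]
  push_cast
  ring

theorem moebiusSqDivTotient_mul_zeta : moebiusSqDivTotient * ζ = selfDivTotient := by
  rw [IsMultiplicative.eq_iff_eq_on_prime_powers _
    (isMultiplicative_moebiusSqDivTotient.mul isMultiplicative_zeta.natCast) _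
    isMultiplicative_selfDivTotient]
  intro p i hp
  rw [coe_mul_zeta_apply, Nat.sum_divisors_prime_pow hp]
  cases i with
  | zero => simp
  | succ j =>
    rw [sum_range_succ', sum_range_succ', sum_eq_zero fun k _ => by
      simp [moebius_apply_prime_pow hp (show k + 1 + 1 ≠ 0 by omega)]]
    have hp0 : (p : ℝ) ≠ 0 := by exact_mod_cast hp.ne_zero
    have hp1 : (p : ℝ) - 1 ≠ 0 := sub_ne_zero.mpr (by exact_mod_cast hp.one_lt.ne')
    simp [moebius_apply_prime hp, Nat.totient_prime hp, Nat.totient_prime_pow_succ hp,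
      Nat.cast_sub hp.one_le]
    field_simp
    ring

def chiDivSelf : ArithmeticFunction ℝ := ⟨fun n => chi n / n, by simp⟩

@[simp]
lemma chiDivSelf_apply (n : ℕ) : chiDivSelf n = chi n / n := rfl

lemma chiDivSelf_mul (a b : ℕ) : chiDivSelf (a * b) = chiDivSelf a * chiDivSelf b := by
  simp only [chiDivSelf_apply, chi_mul, Nat.cast_mul, mul_div_mul_comm]

lemma isMultiplicative_chiDivSelf : chiDivSelf.IsMultiplicative :=
  ⟨by simp [chi], fun _ => chiDivSelf_mul _ _⟩

def chiCorrection : ArithmeticFunction ℝ := moebiusSqDivTotient.pmul chiDivSelf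

lemma isMultiplicative_chiCorrection : chiCorrection.IsMultiplicative :=
  isMultiplicative_moebiusSqDivTotient.pmul isMultiplicative_chiDivSelf

theorem chiCorrection_mul_chiDivSelf :
    chiCorrection * chiDivSelf = selfDivTotient.pmul chiDivSelf := by
  calc chiCorrection * chiDivSelf
      = moebiusSqDivTotient.pmul chiDivSelf * (ζ : ArithmeticFunction ℝ).pmul chiDivSelf := by
        rw [zeta_pmul]; rfl
    _ = _ := by rw [pmul_mul_pmul chiDivSelf_mul, moebiusSqDivTotient_mul_zeta]

lemma selfDivTotient_pmul_chiDivSelf_apply (n : ℕ) :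
    selfDivTotient.pmul chiDivSelf n = chi n / φ n := by
  rcases eq_or_ne n 0 with rfl | hn
  · simp
  · simp only [pmul_apply, selfDivTotient_apply, chiDivSelf_apply]
    field_simp

lemma norm_chiCorrection_le (n : ℕ) : ‖chiCorrection n‖ ≤ ((n : ℝ) * φ n)⁻¹ := by
  have hμ : |(μ n : ℝ)| ≤ 1 := by exact_mod_cast abs_moebius_le_one
  have h : chiCorrection n = ((μ n : ℝ) ^ 2 * chi n) * ((n : ℝ) * φ n)⁻¹ := by
    simp only [chiCorrection, pmul_apply, moebiusSqDivTotient_apply, chiDivSelf_apply]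
    ring
  rw [h, norm_mul, norm_inv, Real.norm_of_nonneg (by positivity : (0 : ℝ) ≤ n * φ n)]
  refine mul_le_of_le_one_left (by positivity) ?_
  rw [norm_mul, norm_pow, Real.norm_eq_abs, Real.norm_eq_abs]
  exact mul_le_one₀ (pow_le_one₀ (abs_nonneg _) hμ) (abs_nonneg _) (abs_chi_le_one n)

lemma summable_norm_chiCorrection : Summable (‖chiCorrection ·‖) :=
  .of_nonneg_of_le (fun n => norm_nonneg (chiCorrection n)) norm_chiCorrection_le
    summable_inv_mul_totient

lemma tsum_chiCorrection_prime_pow {p : ℕ} (hp : p.Prime) :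
    ∑' e, chiCorrection (p ^ e) = 1 + chi p / (p * (p - 1)) := by
  rw [tsum_eq_sum (s := range 2) fun e he => by
    simp [chiCorrection, moebius_apply_prime_pow hp (show e ≠ 0 by simp at he; omega),
      show e ≠ 1 by simp at he; omega]]
  have hp0 : (p : ℝ) ≠ 0 := by exact_mod_cast hp.ne_zero
  have hp1 : (p : ℝ) - 1 ≠ 0 := sub_ne_zero.mpr (by exact_mod_cast hp.one_lt.ne')
  simp [sum_range_succ, chiCorrection, moebius_apply_prime hp, Nat.totient_prime hp,
    Nat.cast_sub hp.one_le, show chi 1 = 1 by simp [chi]]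
  field_simp

theorem sum_chi_div_totient :
    ∃ c₁ L : ℝ,
      Tendsto (fun N : ℕ => ∑ b ∈ Finset.range N, chi b / (Nat.totient b : ℝ))
        atTop (nhds c₁) ∧
      Tendsto (fun N : ℕ => ∑ n ∈ Finset.range N, chi n / (n : ℝ)) atTop (nhds L) ∧
      Multipliable (fun p : Nat.Primes =>
        1 + chi p / (((p : ℕ) : ℝ) * (((p : ℕ) : ℝ) - 1))) ∧
      c₁ = L * ∏' p : Nat.Primes,
        (1 + chi p / (((p : ℕ) : ℝ) * (((p : ℕ) : ℝ) - 1))) := by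
  have hprod : HasProd
      (fun p : Nat.Primes => 1 + chi p / (((p : ℕ) : ℝ) * (((p : ℕ) : ℝ) - 1)))
      (∑' n, chiCorrection n) :=
    (isMultiplicative_chiCorrection.eulerProduct_hasProd summable_norm_chiCorrection).congr_fun
      fun p => (tsum_chiCorrection_prime_pow p.prop).symm
  have hc₁ : Tendsto (fun N : ℕ => ∑ b ∈ range N, chi b / (φ b : ℝ)) atTop
      (𝓝 ((∑' n, chiCorrection n) * (Real.pi / 4))) := by
    simp_rw [← selfDivTotient_pmul_chiDivSelf_apply, tendsto_sum_range_iff_tendsto_sum_Ioc,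
      ← chiCorrection_mul_chiDivSelf]
    exact tendsto_sum_Ioc_mul summable_norm_chiCorrection
      ((tendsto_sum_range_iff_tendsto_sum_Ioc chiDivSelf).mp tendsto_sum_range_chi_div)
  exact ⟨_, _, hc₁, tendsto_sum_range_chi_div, hprod.multipliable,
    by rw [hprod.tprod_eq, mul_comm]⟩
end
end
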